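/- arXiv:1001.2409 — 3 statements merged into one kernel-verified Lean document; each statement's English description precedes it below -/
import Mathlib

section
/- Let ω(x,t) have continuous second derivatives in the half-plane x ≥ 0, satisfy the sine-Gordon equation ω_xx − ω_tt = sin ω, the boundary conditions ω(0,t) = ω₀(t) and ω_x(0,t) = ω₁(t) for −∞ < t < ∞, and the boundedness condition sup_{x≥0, t∈ℝ}(|ω_x(x,t)| + |ω_t(x,t)|) < ∞. Then cos ω(x,t) for x ≥ 0 is uniquely determined by the boundary data ω₀, ω₁: if ω̃ is another function with the same properties and the same boundary data, then cos ω̃(x,t) = cos ω(x,t) for all x ≥ 0 and t ∈ ℝ. -/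
open Set Function

/-- `ω` (with partial derivatives `ωx`, `ωt`) is a solution, with continuous second
derivatives in the half-plane `x ≥ 0`, of the sine-Gordon equation in laboratory
coordinates `ω_xx − ω_tt = sin ω`. -/
def IsSGSolution (ω ωx ωt : ℝ → ℝ → ℝ) : Prop :=
  ContDiffOn ℝ 2 (uncurry ω) (Ici 0 ×ˢ univ) ∧
  (∀ t : ℝ, ∀ x ∈ Ici (0 : ℝ), HasDerivWithinAt (fun s => ω s t) (ωx x t) (Ici 0) x) ∧
  (∀ x ∈ Ici (0 : ℝ), ∀ t : ℝ, HasDerivAt (fun s => ω x s) (ωt x t) t) ∧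
  ∃ ωxx ωtt : ℝ → ℝ → ℝ,
    (∀ t : ℝ, ∀ x ∈ Ici (0 : ℝ), HasDerivWithinAt (fun s => ωx s t) (ωxx x t) (Ici 0) x) ∧
    (∀ x ∈ Ici (0 : ℝ), ∀ t : ℝ, HasDerivAt (fun s => ωt x s) (ωtt x t) t) ∧
    (∀ x ∈ Ici (0 : ℝ), ∀ t : ℝ, ωxx x t - ωtt x t = Real.sin (ω x t))

/-! Along the characteristics `t = c ± x` the Riemann invariants `ω_x ∓ ω_t` of a solution satisfy
`d/dx (ω_x ∓ ω_t) = sin ω`, because the mixed second derivatives cancel. For two solutions with the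
same data on `x = 0` the difference `v = ω - ω'` vanishes on the boundary, and so do the differences
of the Riemann invariants. Since `sin` is `1`-Lipschitz, a bound `|v| ≤ A xᵐ/m!` on the half-plane
yields `|∂ₓv| ≤ A xᵐ⁺¹/(m+1)!` by integrating along characteristics, and then
`|v| ≤ A xᵐ⁺²/(m+2)!` by integrating in `x`. Starting from `|∂ₓv| ≤ C` (bounded derivatives) this
gives `|v(x,t)| ≤ C x²ⁿ⁺¹/(2n+1)!` for every `n`, so `v = 0`: the solution itself, not only
`cos ω`, is determined by its boundary data. -/

open scoped Nat

def halfPlane : Set (ℝ × ℝ) := Ici 0 ×ˢ univ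

@[simp]
theorem mk_mem_halfPlane {x t : ℝ} : (x, t) ∈ halfPlane ↔ 0 ≤ x := by
  simp [halfPlane]

theorem uniqueDiffOn_halfPlane : UniqueDiffOn ℝ halfPlane :=
  (uniqueDiffOn_Ici 0).prod uniqueDiffOn_univ

theorem closure_interior_halfPlane : closure (interior halfPlane) = halfPlane := by
  simp [halfPlane, interior_prod_eq, closure_prod_eq]

theorem ContinuousLinearMap.apply_prodMk {E : Type*} [NormedAddCommGroup E] [NormedSpace ℝ E]
    (L : ℝ × ℝ →L[ℝ] E) (a b : ℝ) : L (a, b) = a • L (1, 0) + b • L (0, 1) := by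
  rw [← map_smul, ← map_smul, ← map_add]
  simp

section HalfPlane

variable {E : Type*} [NormedAddCommGroup E] [NormedSpace ℝ E]
  {g : ℝ × ℝ → E} {g' : ℝ × ℝ →L[ℝ] E}

theorem HasFDerivWithinAt.comp_line_halfPlane {c ε σ : ℝ}
    (hg : HasFDerivWithinAt g g' halfPlane (σ, c + ε * σ)) :
    HasDerivWithinAt (fun s => g (s, c + ε * s)) (g' (1, ε)) (Ici 0) σ := by
  have hline : HasDerivWithinAt (fun s : ℝ => (s, c + ε * s)) (1, ε) (Ici 0) σ :=
    (hasDerivWithinAt_id σ _).prodMk <| by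
      simpa using ((hasDerivWithinAt_id σ (Ici 0)).const_mul ε).const_add c
  exact hg.comp_hasDerivWithinAt σ hline fun s hs => mk_mem_halfPlane.2 hs

theorem HasFDerivWithinAt.comp_horizontal_halfPlane {x t : ℝ}
    (hg : HasFDerivWithinAt g g' halfPlane (x, t)) :
    HasDerivWithinAt (fun s => g (s, t)) (g' (1, 0)) (Ici 0) x := by
  simpa using comp_line_halfPlane (c := t) (ε := 0) (by simpa using hg)

theorem HasFDerivWithinAt.comp_vertical_halfPlane {x t : ℝ}
    (hg : HasFDerivWithinAt g g' halfPlane (x, t)) (hx : 0 ≤ x) :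
    HasDerivAt (fun s => g (x, s)) (g' (0, 1)) t := by
  have hvert : HasDerivWithinAt (fun s : ℝ => (x, s)) (0, 1) univ t :=
    (hasDerivWithinAt_const t _ x).prodMk (hasDerivWithinAt_id t _)
  exact hasDerivWithinAt_univ.1 <|
    hg.comp_hasDerivWithinAt t hvert fun _ _ => mk_mem_halfPlane.2 hx

end HalfPlane

theorem hasDerivWithinAt_characteristic {f fx ft fxx ftt : ℝ → ℝ → ℝ}
    (hf : ContDiffOn ℝ 2 (uncurry f) halfPlane)
    (hfx : ∀ t : ℝ, ∀ x ∈ Ici (0 : ℝ), HasDerivWithinAt (fun s => f s t) (fx x t) (Ici 0) x)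
    (hft : ∀ x ∈ Ici (0 : ℝ), ∀ t : ℝ, HasDerivAt (fun s => f x s) (ft x t) t)
    (hfxx : ∀ t : ℝ, ∀ x ∈ Ici (0 : ℝ), HasDerivWithinAt (fun s => fx s t) (fxx x t) (Ici 0) x)
    (hftt : ∀ x ∈ Ici (0 : ℝ), ∀ t : ℝ, HasDerivAt (fun s => ft x s) (ftt x t) t)
    (c ε : ℝ) {σ : ℝ} (hσ : 0 ≤ σ) :
    HasDerivWithinAt (fun s => fx s (c + ε * s) - ε * ft s (c + ε * s))
      (fxx σ (c + ε * σ) - ε ^ 2 * ftt σ (c + ε * σ)) (Ici 0) σ := by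
  set F := fderivWithin ℝ (uncurry f) halfPlane
  set G := fderivWithin ℝ F halfPlane
  have hF : ∀ p ∈ halfPlane, HasFDerivWithinAt (uncurry f) (F p) halfPlane p := fun p hp =>
    (hf.differentiableOn (by norm_num) p hp).hasFDerivWithinAt
  have hG : ∀ p ∈ halfPlane, HasFDerivWithinAt F (G p) halfPlane p := fun p hp =>
    ((hf.fderivWithin (m := 1) uniqueDiffOn_halfPlane (by norm_num)).differentiableOn
      one_ne_zero p hp).hasFDerivWithinAt
  have hFx : ∀ x t, 0 ≤ x → F (x, t) (1, 0) = fx x t := fun x t hx =>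
    (uniqueDiffOn_Ici 0 x hx).eq_deriv _
      (hF _ (mk_mem_halfPlane.2 hx)).comp_horizontal_halfPlane (hfx t x hx)
  have hFt : ∀ x t, 0 ≤ x → F (x, t) (0, 1) = ft x t := fun x t hx =>
    ((hF _ (mk_mem_halfPlane.2 hx)).comp_vertical_halfPlane hx).unique (hft x hx t)
  set p := (σ, c + ε * σ)
  have hp : p ∈ halfPlane := mk_mem_halfPlane.2 hσ
  have hGxx : G p (1, 0) (1, 0) = fxx σ (c + ε * σ) := by
    have h : HasDerivWithinAt (fun s => F (s, c + ε * σ) (1, 0)) (G p (1, 0) (1, 0)) (Ici 0) σ := by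
      simpa using (hG p hp).comp_horizontal_halfPlane.clm_apply (hasDerivWithinAt_const σ _ (1, 0))
    exact (uniqueDiffOn_Ici 0 σ hσ).eq_deriv _
      (h.congr (fun s hs => (hFx s _ hs).symm) (hFx σ _ hσ).symm) (hfxx _ σ hσ)
  have hGtt : G p (0, 1) (0, 1) = ftt σ (c + ε * σ) := by
    have h : HasDerivAt (fun s => F (σ, s) (0, 1)) (G p (0, 1) (0, 1)) (c + ε * σ) := by
      simpa using ((hG p hp).comp_vertical_halfPlane hσ).clm_apply (hasDerivAt_const _ (0, 1))
    exact (h.congr_of_eventuallyEq (.of_forall fun s => (hFt σ s hσ).symm)).unique (hftt σ hσ _)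
  have hGsymm : G p (1, 0) (0, 1) = G p (0, 1) (1, 0) :=
    ((hf p hp).isSymmSndFDerivWithinAt (by simp) uniqueDiffOn_halfPlane
      (by rw [closure_interior_halfPlane]; exact hp) hp) _ _
  have h : HasDerivWithinAt (fun s => F (s, c + ε * s) (1, -ε)) (G p (1, ε) (1, -ε)) (Ici 0) σ := by
    simpa using (hG p hp).comp_line_halfPlane.clm_apply (hasDerivWithinAt_const σ _ (1, -ε))
  have hFline : ∀ s, 0 ≤ s →
      F (s, c + ε * s) (1, -ε) = fx s (c + ε * s) - ε * ft s (c + ε * s) := fun s hs => by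
    rw [ContinuousLinearMap.apply_prodMk, hFx s _ hs, hFt s _ hs, one_smul, smul_eq_mul]
    ring
  refine (h.congr (fun s hs => (hFline s hs).symm) (hFline σ hσ).symm).congr_deriv ?_
  rw [ContinuousLinearMap.apply_prodMk (G p), add_apply, smul_apply, smul_apply,
    ContinuousLinearMap.apply_prodMk (G p (1, 0)), ContinuousLinearMap.apply_prodMk (G p (0, 1))]
  simp only [smul_eq_mul, hGsymm, hGxx, hGtt]
  ring

theorem abs_le_mul_pow_succ_div_factorial {g g' : ℝ → ℝ} {A x : ℝ} {m : ℕ}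
    (hg : ∀ σ ∈ Ici (0 : ℝ), HasDerivWithinAt g (g' σ) (Ici 0) σ) (hg0 : g 0 = 0)
    (hbound : ∀ σ ∈ Ici (0 : ℝ), |g' σ| ≤ A * σ ^ m / m !) (hx : 0 ≤ x) :
    |g x| ≤ A * x ^ (m + 1) / (m + 1)! := by
  have hB : ∀ σ : ℝ, HasDerivAt (fun σ => A * σ ^ (m + 1) / (m + 1)!) (A * σ ^ m / m !) σ := by
    intro σ
    refine (((hasDerivAt_pow (m + 1) σ).const_mul A).div_const _).congr_deriv ?_
    rw [Nat.factorial_succ]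
    push_cast
    field_simp
  simpa [Real.norm_eq_abs] using
    image_norm_le_of_norm_deriv_right_le_deriv_boundary
      (fun σ hσ => ((hg σ hσ.1).mono Icc_subset_Ici_self).continuousWithinAt)
      (fun σ hσ => (hg σ hσ.1).mono (Ici_subset_Ici.2 hσ.1)) (by simp [hg0]) hB
      (fun σ hσ => hbound σ hσ.1) ⟨hx, le_rfl⟩

theorem eq_zero_of_forall_abs_le_mul_pow_div_factorial {a C x : ℝ} {k : ℕ → ℕ}
    (hk : Filter.Tendsto k Filter.atTop Filter.atTop)
    (h : ∀ n, |a| ≤ C * x ^ k n / (k n)!) : a = 0 := by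
  have hlim : Filter.Tendsto (fun n => C * x ^ k n / (k n)!) Filter.atTop (nhds 0) := by
    simpa [mul_div_assoc] using
      ((FloorSemiring.tendsto_pow_div_factorial_atTop x).comp hk).const_mul C
  exact abs_nonpos_iff.1 (ge_of_tendsto' hlim h)

namespace IsSGSolution

variable {ω ωx ωt ω' ωx' ωt' : ℝ → ℝ → ℝ}

theorem hasDerivWithinAt_riemannInvariant
    (h : IsSGSolution ω ωx ωt) (c : ℝ) {ε : ℝ} (hε : ε ^ 2 = 1) {σ : ℝ} (hσ : 0 ≤ σ) :
    HasDerivWithinAt (fun s => ωx s (c + ε * s) - ε * ωt s (c + ε * s))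
      (Real.sin (ω σ (c + ε * σ))) (Ici 0) σ := by
  obtain ⟨hC2, hωx, hωt, ωxx, ωtt, hωxx, hωtt, hsg⟩ := h
  exact (hasDerivWithinAt_characteristic hC2 hωx hωt hωxx hωtt c ε hσ).congr_deriv
    (by rw [hε, one_mul, hsg σ hσ])

theorem timeDeriv_eq_of_eq_on_boundary (hω : IsSGSolution ω ωx ωt)
    (hω' : IsSGSolution ω' ωx' ωt') (h0 : ∀ t, ω 0 t = ω' 0 t) (t : ℝ) :
    ωt 0 t = ωt' 0 t :=
  ((funext h0 : (fun s => ω 0 s) = fun s => ω' 0 s) ▸ hω.2.2.1 0 self_mem_Ici t).unique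
    (hω'.2.2.1 0 self_mem_Ici t)

theorem abs_riemannInvariant_sub_le (hω : IsSGSolution ω ωx ωt) (hω' : IsSGSolution ω' ωx' ωt')
    (hx0 : ∀ t, ωx 0 t = ωx' 0 t) (ht0 : ∀ t, ωt 0 t = ωt' 0 t) {A : ℝ} {m : ℕ}
    (hbound : ∀ x ∈ Ici (0 : ℝ), ∀ t, |ω x t - ω' x t| ≤ A * x ^ m / m !)
    {ε : ℝ} (hε : ε ^ 2 = 1) {x : ℝ} (hx : 0 ≤ x) (t : ℝ) :
    |(ωx x t - ε * ωt x t) - (ωx' x t - ε * ωt' x t)| ≤ A * x ^ (m + 1) / (m + 1)! := by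
  have hline : t - ε * x + ε * x = t := sub_add_cancel t _
  simpa only [hline] using abs_le_mul_pow_succ_div_factorial
    (g := fun s => (ωx s (t - ε * x + ε * s) - ε * ωt s (t - ε * x + ε * s)) -
      (ωx' s (t - ε * x + ε * s) - ε * ωt' s (t - ε * x + ε * s)))
    (fun σ hσ => (hω.hasDerivWithinAt_riemannInvariant _ hε hσ).sub
      (hω'.hasDerivWithinAt_riemannInvariant _ hε hσ))
    (by simp [hx0, ht0])
    (fun σ hσ => (Real.abs_sin_sub_sin_le _ _).trans (hbound σ hσ _)) hx

theorem abs_xDeriv_sub_le (hω : IsSGSolution ω ωx ωt) (hω' : IsSGSolution ω' ωx' ωt')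
    (hx0 : ∀ t, ωx 0 t = ωx' 0 t) (ht0 : ∀ t, ωt 0 t = ωt' 0 t) {A : ℝ} {m : ℕ}
    (hbound : ∀ x ∈ Ici (0 : ℝ), ∀ t, |ω x t - ω' x t| ≤ A * x ^ m / m !)
    (x : ℝ) (hx : x ∈ Ici 0) (t : ℝ) :
    |ωx x t - ωx' x t| ≤ A * x ^ (m + 1) / (m + 1)! := by
  have hplus := abs_riemannInvariant_sub_le hω hω' hx0 ht0 hbound (ε := 1) (by norm_num) hx t
  have hminus := abs_riemannInvariant_sub_le hω hω' hx0 ht0 hbound (ε := -1) (by norm_num) hx t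
  simp only [one_mul, neg_one_mul, sub_neg_eq_add] at hplus hminus
  calc |ωx x t - ωx' x t|
      = |(ωx x t - ωt x t - (ωx' x t - ωt' x t)) + (ωx x t + ωt x t - (ωx' x t + ωt' x t))| / 2 := by
        rw [← abs_two, ← abs_div]
        ring_nf
    _ ≤ (|ωx x t - ωt x t - (ωx' x t - ωt' x t)| + |ωx x t + ωt x t - (ωx' x t + ωt' x t)|) / 2 := by
        gcongr
        exact abs_add_le _ _
    _ ≤ A * x ^ (m + 1) / (m + 1)! := by linarith

theorem abs_sub_le_of_abs_xDeriv_sub_le (hω : IsSGSolution ω ωx ωt)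
    (hω' : IsSGSolution ω' ωx' ωt') (h0 : ∀ t, ω 0 t = ω' 0 t) {A : ℝ} {m : ℕ}
    (hbound : ∀ x ∈ Ici (0 : ℝ), ∀ t, |ωx x t - ωx' x t| ≤ A * x ^ m / m !)
    (x : ℝ) (hx : x ∈ Ici 0) (t : ℝ) :
    |ω x t - ω' x t| ≤ A * x ^ (m + 1) / (m + 1)! :=
  abs_le_mul_pow_succ_div_factorial (fun σ hσ => (hω.2.1 t σ hσ).sub (hω'.2.1 t σ hσ))
    (sub_eq_zero.2 (h0 t)) (fun σ hσ => hbound σ hσ t) hx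

theorem abs_sub_le_mul_pow_div_factorial (hω : IsSGSolution ω ωx ωt)
    (hω' : IsSGSolution ω' ωx' ωt') (h0 : ∀ t, ω 0 t = ω' 0 t) (hx0 : ∀ t, ωx 0 t = ωx' 0 t)
    {C : ℝ} (hC : ∀ x ∈ Ici (0 : ℝ), ∀ t, |ωx x t - ωx' x t| ≤ C) (n : ℕ) :
    ∀ x ∈ Ici (0 : ℝ), ∀ t, |ω x t - ω' x t| ≤ C * x ^ (2 * n + 1) / (2 * n + 1)! := by
  induction n with
  | zero => simpa using abs_sub_le_of_abs_xDeriv_sub_le hω hω' h0 (m := 0) (by simpa using hC)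
  | succ n ih =>
    exact abs_sub_le_of_abs_xDeriv_sub_le hω hω' h0 <| abs_xDeriv_sub_le hω hω' hx0
      (timeDeriv_eq_of_eq_on_boundary hω hω' h0) ih

theorem eq_of_eq_on_boundary (hω : IsSGSolution ω ωx ωt) (hω' : IsSGSolution ω' ωx' ωt')
    (h0 : ∀ t, ω 0 t = ω' 0 t) (hx0 : ∀ t, ωx 0 t = ωx' 0 t)
    (hC : ∃ C, ∀ x ∈ Ici (0 : ℝ), ∀ t, |ωx x t - ωx' x t| ≤ C)
    (x : ℝ) (hx : x ∈ Ici 0) (t : ℝ) : ω x t = ω' x t := by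
  obtain ⟨C, hC⟩ := hC
  exact sub_eq_zero.1 <| eq_zero_of_forall_abs_le_mul_pow_div_factorial
    (StrictMono.tendsto_atTop fun _ _ h => by omega)
    fun n => abs_sub_le_mul_pow_div_factorial hω hω' h0 hx0 hC n x hx t

end IsSGSolution

/-- Theorem `TmSG` (uniqueness part): a bounded-derivative solution of the
sine-Gordon equation `ω_xx − ω_tt = sin ω` on `x ≥ 0` has `cos ω(x,t)` uniquely
determined by the boundary data `ω(0,·)` and `ω_x(0,·)`. -/
theorem sineGordon_cos_unique_from_boundary_data
    (ω ωx ωt ω' ωx' ωt' : ℝ → ℝ → ℝ) (ω₀ ω₁ : ℝ → ℝ)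
    (hω : IsSGSolution ω ωx ωt) (hω' : IsSGSolution ω' ωx' ωt')
    (hbdd : ∃ C : ℝ, ∀ x ∈ Ici (0 : ℝ), ∀ t : ℝ, |ωx x t| + |ωt x t| ≤ C)
    (hbdd' : ∃ C : ℝ, ∀ x ∈ Ici (0 : ℝ), ∀ t : ℝ, |ωx' x t| + |ωt' x t| ≤ C)
    (hbc : ∀ t : ℝ, ω 0 t = ω₀ t ∧ ωx 0 t = ω₁ t)
    (hbc' : ∀ t : ℝ, ω' 0 t = ω₀ t ∧ ωx' 0 t = ω₁ t) :
    ∀ x ∈ Ici (0 : ℝ), ∀ t : ℝ, Real.cos (ω' x t) = Real.cos (ω x t) := by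
  obtain ⟨C, hC⟩ := hbdd
  obtain ⟨C', hC'⟩ := hbdd'
  have hxDeriv_bdd : ∀ x ∈ Ici (0 : ℝ), ∀ t, |ωx x t - ωx' x t| ≤ C + C' := fun x hx t => by
    linarith [abs_sub (ωx x t) (ωx' x t), hC x hx t, hC' x hx t, abs_nonneg (ωt x t),
      abs_nonneg (ωt' x t)]
  intro x hx t
  rw [hω.eq_of_eq_on_boundary hω' (fun t => (hbc t).1.trans (hbc' t).1.symm)
    (fun t => (hbc t).2.trans (hbc' t).2.symm) ⟨C + C', hxDeriv_bdd⟩ x hx t]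
end

section
/- Fix M > 0 and μ ∈ ℂ with Im μ < −M/4. Let W(x,μ) be a 2×2 matrix-valued differentiable function on [0,∞) satisfying W′(x,μ) = (iμ j + ξ(x,μ)) W(x,μ), where j = diag(1,−1) and ξ is a 2×2 matrix function with sup_{x ≥ 0} ‖ξ(x,μ)‖ < M/4. Then for every x ≥ 0 at which W(x,μ) is invertible, the derivative (d/dx)(W(x,μ)* j W(x,μ)) is a positive definite 2×2 matrix. -/
open MeasureTheory Complex Set Matrix
open scoped Matrix.Norms.L2Operator ComplexOrder

/-- The signature matrix `j = diag(1,−1)`. -/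
noncomputable def sgnJ : Matrix (Fin 2) (Fin 2) ℂ := !![1, 0; 0, -1]

/-!
If `W′ = G W`, then `(W* j W)′ = W* (G* j + j G) W`, and for `G = iμ j + ξ` the middle factor is
`-2 Im μ + (ξ* j + j ξ)`. Since `j` is a unitary, `‖ξ* j + j ξ‖ ≤ 2‖ξ‖ < M/2 < -2 Im μ`, so the
middle factor is positive definite, and conjugation by the invertible `W` preserves this.
-/

lemma sgnJ_conjTranspose : sgnJᴴ = sgnJ := by
  ext i j; fin_cases i <;> fin_cases j <;> simp [sgnJ]

lemma sgnJ_mul_sgnJ : sgnJ * sgnJ = 1 := by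
  ext i j; fin_cases i <;> fin_cases j <;> simp [sgnJ, Matrix.mul_apply]

lemma norm_sgnJ : ‖sgnJ‖ = 1 := by
  have h := Matrix.l2_opNorm_conjTranspose_mul_self sgnJ
  rw [sgnJ_conjTranspose, sgnJ_mul_sgnJ, norm_one] at h
  nlinarith [norm_nonneg sgnJ]

section

open scoped MatrixOrder

lemma Matrix.posDef_smul_one_add_of_norm_lt {n : Type*} [Fintype n] [DecidableEq n]
    {B : Matrix n n ℂ} (hB : B.IsHermitian) {t : ℝ} (ht : ‖B‖ < t) :
    (t • (1 : Matrix n n ℂ) + B).PosDef := by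
  have hpsd : (‖B‖ • (1 : Matrix n n ℂ) + B).PosSemidef := by
    have := hB.isSelfAdjoint.neg_algebraMap_norm_le_self
    rwa [Matrix.le_iff, sub_neg_eq_add, Algebra.algebraMap_eq_smul_one, add_comm] at this
  have hpd : ((t - ‖B‖) • (1 : Matrix n n ℂ)).PosDef := PosDef.one.smul (sub_pos.mpr ht)
  convert hpd.add_posSemidef hpsd using 1
  rw [sub_smul]; abel

end

lemma isHermitian_conjTranspose_mul_sgnJ_add (ξ : Matrix (Fin 2) (Fin 2) ℂ) :
    (ξᴴ * sgnJ + sgnJ * ξ).IsHermitian := by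
  simp only [IsHermitian, conjTranspose_add, conjTranspose_mul, sgnJ_conjTranspose,
    conjTranspose_conjTranspose, add_comm]

lemma norm_conjTranspose_mul_sgnJ_add_le (ξ : Matrix (Fin 2) (Fin 2) ℂ) :
    ‖ξᴴ * sgnJ + sgnJ * ξ‖ ≤ 2 * ‖ξ‖ :=
  calc ‖ξᴴ * sgnJ + sgnJ * ξ‖ ≤ ‖ξᴴ‖ * ‖sgnJ‖ + ‖sgnJ‖ * ‖ξ‖ :=
        (norm_add_le _ _).trans (add_le_add (norm_mul_le _ _) (norm_mul_le _ _))
    _ = 2 * ‖ξ‖ := by rw [l2_opNorm_conjTranspose, norm_sgnJ]; ring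

lemma generator_conjTranspose_mul_sgnJ_add (μ : ℂ) (ξ : Matrix (Fin 2) (Fin 2) ℂ) :
    ((I * μ) • sgnJ + ξ)ᴴ * sgnJ + sgnJ * ((I * μ) • sgnJ + ξ) =
      (-2 * μ.im) • (1 : Matrix (Fin 2) (Fin 2) ℂ) + (ξᴴ * sgnJ + sgnJ * ξ) := by
  have hskew : star (I * μ) + I * μ = ((-2 * μ.im : ℝ) : ℂ) := by
    apply Complex.ext <;> simp; ring
  simp only [conjTranspose_add, conjTranspose_smul, sgnJ_conjTranspose, Matrix.add_mul,
    Matrix.mul_add, Matrix.smul_mul, Matrix.mul_smul, sgnJ_mul_sgnJ]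
  rw [← Complex.coe_smul, ← hskew, add_smul]
  abel

lemma HasDerivWithinAt.conjTranspose_mul_mul {n : Type*} [Fintype n] [DecidableEq n]
    {W : ℝ → Matrix n n ℂ} {A : Matrix n n ℂ} {s : Set ℝ} {x : ℝ}
    (hW : HasDerivWithinAt W A s x) (J : Matrix n n ℂ) :
    HasDerivWithinAt (fun y => (W y)ᴴ * J * W y) (Aᴴ * J * W x + (W x)ᴴ * J * A) s x :=
  (hW.star.mul_const J).mul hW

theorem deriv_WstarJW_posDef_general
    (M : ℝ) (μ : ℂ) (hμ : μ.im < -(M / 4))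
    (W ξ : ℝ → Matrix (Fin 2) (Fin 2) ℂ)
    (hW : ∀ x ∈ Ici (0 : ℝ),
      HasDerivWithinAt W ((Complex.I * μ) • sgnJ * W x + ξ x * W x) (Ici 0) x)
    (hξ : ∃ c : ℝ, c < M / 4 ∧ ∀ x ∈ Ici (0 : ℝ), ‖ξ x‖ ≤ c) :
    ∀ x ∈ Ici (0 : ℝ), IsUnit (W x) →
      ∃ R : Matrix (Fin 2) (Fin 2) ℂ,
        HasDerivWithinAt (fun y => (W y)ᴴ * sgnJ * W y) R (Ici 0) x ∧ R.PosDef := by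
  obtain ⟨c, hcM, hξc⟩ := hξ
  intro x hx hWx
  set G := (I * μ) • sgnJ + ξ x
  have hderiv : HasDerivWithinAt W (G * W x) (Ici 0) x := by
    simpa only [G, Matrix.add_mul] using hW x hx
  refine ⟨_, hderiv.conjTranspose_mul_mul sgnJ, ?_⟩
  have hform : (G * W x)ᴴ * sgnJ * W x + (W x)ᴴ * sgnJ * (G * W x) =
      star (W x) * (Gᴴ * sgnJ + sgnJ * G) * W x := by
    simp only [conjTranspose_mul, star_eq_conjTranspose, Matrix.mul_add, Matrix.add_mul,
      Matrix.mul_assoc]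
  rw [hform, hWx.posDef_star_left_conjugate_iff, generator_conjTranspose_mul_sgnJ_add]
  refine posDef_smul_one_add_of_norm_lt (isHermitian_conjTranspose_mul_sgnJ_add _) ?_
  linarith [norm_conjTranspose_mul_sgnJ_add_le (ξ x), hξc x hx]

/-- Formula (1.10): if `W′(x,μ) = (iμ j + ξ(x,μ)) W(x,μ)` with
`sup_{x≥0} ‖ξ(x,μ)‖ < M/4` (operator norm) and `Im μ < −M/4`, then
`(d/dx)(W(x,μ)* j W(x,μ)) > 0` wherever `W(x,μ)` is invertible. -/
theorem deriv_WstarJW_posDef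
    (M : ℝ) (hM : 0 < M) (μ : ℂ) (hμ : μ.im < -(M / 4))
    (W ξ : ℝ → Matrix (Fin 2) (Fin 2) ℂ)
    (hW : ∀ x ∈ Ici (0 : ℝ),
      HasDerivWithinAt W ((Complex.I * μ) • sgnJ * W x + ξ x * W x) (Ici 0) x)
    (hξ : ∃ c : ℝ, c < M / 4 ∧ ∀ x ∈ Ici (0 : ℝ), ‖ξ x‖ ≤ c) :
    ∀ x ∈ Ici (0 : ℝ), IsUnit (W x) →
      ∃ R : Matrix (Fin 2) (Fin 2) ℂ,
        HasDerivWithinAt (fun y => (W y)ᴴ * sgnJ * W y) R (Ici 0) x ∧ R.PosDef :=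
  deriv_WstarJW_posDef_general M μ hμ W ξ hW hξ
end

section
/- Fix l > 0, M > 0 and μ with Im μ < −M/4, and let 𝔄 = {𝔄_{jp}}_{j,p=1}^2 be a 2×2 complex matrix satisfying 𝔄* j 𝔄 < j (strict matrix inequality), where j = diag(1,−1), and such that 𝔄 = Q(0)W(l,μ)^{−1} with W(x,μ) solving W′ = (iμj + ξ(x,μ))W, W(0,μ) = Q(0) unitary, sup_x ‖ξ(x,μ)‖ < M/4. For |θ| ≤ 1 and |θ̆| ≤ 1, set ψ = (𝔄_{11}θ + 𝔄_{12})/(𝔄_{21}θ + 𝔄_{22}) and ψ̆ = (𝔄_{11}θ̆ + 𝔄_{12})/(𝔄_{21}θ̆ + 𝔄_{22}). Then both transforms are well defined, |ψ| < 1 and |ψ̆| < 1, and |ψ − ψ̆| ≤ 2 exp((i(conj μ − μ) + M/2)·l) = 2 exp((2 Im μ + M/2)·l). -/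
open MeasureTheory Complex Set Matrix
open scoped Matrix.Norms.L2Operator ComplexOrder

/-!
Put `Y(x) = W(x) W(0)*`: it solves the same system, `Y(0) = 1` and `𝔄 = Y(l)⁻¹`. Strict
`j`-contractivity of `𝔄` gives `|𝔄₁₁θ + 𝔄₁₂| < |𝔄₂₁θ + 𝔄₂₂|` on the closed unit disk, and the
Möbius map of `𝔄` sends that disk onto a disk of radius
`|det 𝔄| / (|𝔄₂₂|² - |𝔄₂₁|²) = |det Y(l)| / φ(l)`, where `φ = |y₁|² - |y₂|²` for the first column
`y` of `Y`. Along the system `φ' ≥ Re(tr ξ) φ + 2(-Im μ - c)(|y₁|² + |y₂|²)` when `‖ξ‖ ≤ c`,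
while `(|det Y|²)' = 2 Re(tr ξ) |det Y|²` by Liouville's formula. The trace terms cancel in the
quotient, so `|det Y| / φ` decays like `exp(2(Im μ + c)x)`; finally `2c < M/2`.
-/

open ComplexConjugate

lemma Matrix.norm_star_dotProduct_mulVec_le {𝕜 m n : Type*} [RCLike 𝕜] [Fintype m] [Fintype n]
    [DecidableEq m] [DecidableEq n] (A : Matrix m n 𝕜) (x : m → 𝕜) (y : n → 𝕜) :
    ‖star x ⬝ᵥ A *ᵥ y‖ ≤ ‖A‖ * ‖WithLp.toLp 2 x‖ * ‖WithLp.toLp 2 y‖ := by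
  have h : star x ⬝ᵥ A *ᵥ y = inner 𝕜 (WithLp.toLp 2 x) (WithLp.toLp 2 (A *ᵥ y)) := by
    rw [EuclideanSpace.inner_toLp_toLp, dotProduct_comm]
  rw [h, mul_comm ‖A‖, mul_assoc]
  exact (norm_inner_le_norm _ _).trans
    (mul_le_mul_of_nonneg_left (A.l2_opNorm_mulVec _) (norm_nonneg _))

lemma sq_norm_toLp_fin_two {𝕜 : Type*} [RCLike 𝕜] (v : Fin 2 → 𝕜) :
    ‖WithLp.toLp 2 v‖ ^ 2 = ‖v 0‖ ^ 2 + ‖v 1‖ ^ 2 := by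
  simp [EuclideanSpace.norm_sq_eq, Fin.sum_univ_two]

lemma abs_re_sub_add_norm_conj_sub_le (A : Matrix (Fin 2) (Fin 2) ℂ) :
    |(A 0 0 - A 1 1).re| + ‖conj (A 0 1) - A 1 0‖ ≤ 2 * ‖A‖ := by
  set s := conj (A 0 1) - A 1 0
  have hunit : ∀ u : ℂ, ‖u‖ = 1 → |(A 0 0 - A 1 1).re - (conj u * s).re| ≤ 2 * ‖A‖ := by
    intro u hu
    have hval : (star ![1, u] ⬝ᵥ A *ᵥ ![1, -u]).re = (A 0 0 - A 1 1).re - (conj u * s).re := by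
      have huu : conj u * u = 1 := by
        rw [← Complex.normSq_eq_conj_mul_self, Complex.normSq_eq_norm_sq, hu, one_pow,
          Complex.ofReal_one]
      have : star ![1, u] ⬝ᵥ A *ᵥ ![1, -u] =
          A 0 0 - A 0 1 * u + conj u * A 1 0 - conj u * u * A 1 1 := by
        simp [dotProduct, mulVec, Fin.sum_univ_two]; ring
      rw [this, huu]
      simp [s, Complex.mul_re, Complex.conj_re, Complex.conj_im]; ring
    have hnorm : ∀ w : ℂ, ‖w‖ = 1 → ‖WithLp.toLp 2 ![1, w]‖ = Real.sqrt 2 := by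
      intro w hw
      rw [← Real.sqrt_sq (norm_nonneg _), sq_norm_toLp_fin_two]
      norm_num [hw]
    have hb := A.norm_star_dotProduct_mulVec_le ![1, u] ![1, -u]
    rw [hnorm u hu, hnorm (-u) (by rw [norm_neg, hu]), mul_assoc,
      Real.mul_self_sqrt zero_le_two] at hb
    rw [← hval, mul_comm]
    exact (Complex.abs_re_le_norm _).trans hb
  obtain ⟨u, hu, hus⟩ : ∃ u : ℂ, ‖u‖ = 1 ∧ conj u * s = ‖s‖ := by
    refine ⟨Complex.exp (s.arg * I), Complex.norm_exp_ofReal_mul_I _, ?_⟩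
    conv_lhs => rw [← Complex.norm_mul_exp_arg_mul_I s, ← Complex.exp_conj]
    rw [mul_left_comm, ← Complex.exp_add]
    simp
  have h₁ := hunit u hu
  have h₂ := hunit (-u) (by rw [norm_neg, hu])
  rw [hus, Complex.ofReal_re] at h₁
  rw [map_neg, neg_mul, hus, Complex.neg_re, Complex.ofReal_re, sub_neg_eq_add] at h₂
  cases abs_cases (A 0 0 - A 1 1).re <;> cases abs_le.mp h₁ <;> cases abs_le.mp h₂ <;> linarith

noncomputable def jNormSq (v : Fin 2 → ℂ) : ℝ := ‖v 0‖ ^ 2 - ‖v 1‖ ^ 2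

lemma star_dotProduct_sgnJ_mulVec (v : Fin 2 → ℂ) : star v ⬝ᵥ sgnJ *ᵥ v = jNormSq v := by
  simp [sgnJ, jNormSq, dotProduct, mulVec, Fin.sum_univ_two, ← Complex.normSq_eq_conj_mul_self,
    Complex.normSq_eq_norm_sq]
  ring

lemma star_dotProduct_sgnJ_sub_mulVec (A : Matrix (Fin 2) (Fin 2) ℂ) (v : Fin 2 → ℂ) :
    star v ⬝ᵥ (sgnJ - Aᴴ * sgnJ * A) *ᵥ v = ((jNormSq v - jNormSq (A *ᵥ v) : ℝ) : ℂ) := by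
  have hadj : star v ⬝ᵥ (Aᴴ * sgnJ * A) *ᵥ v = star (A *ᵥ v) ⬝ᵥ sgnJ *ᵥ (A *ᵥ v) := by
    rw [← mulVec_mulVec, ← mulVec_mulVec, dotProduct_mulVec, star_mulVec]
  rw [sub_mulVec, dotProduct_sub, hadj, star_dotProduct_sgnJ_mulVec, star_dotProduct_sgnJ_mulVec]
  push_cast; ring

lemma norm_toLp_sgnJ_mulVec (y : Fin 2 → ℂ) :
    ‖WithLp.toLp 2 (sgnJ *ᵥ y)‖ = ‖WithLp.toLp 2 y‖ := by
  rw [← sq_eq_sq₀ (norm_nonneg _) (norm_nonneg _), sq_norm_toLp_fin_two, sq_norm_toLp_fin_two]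
  simp [sgnJ, mulVec, dotProduct, Fin.sum_univ_two]

lemma norm_star_sgnJ_mulVec_dotProduct_le (ξ : Matrix (Fin 2) (Fin 2) ℂ) (y : Fin 2 → ℂ) :
    ‖star (sgnJ *ᵥ y) ⬝ᵥ ξ *ᵥ y‖ ≤ ‖ξ‖ * (‖y 0‖ ^ 2 + ‖y 1‖ ^ 2) := by
  have h := ξ.norm_star_dotProduct_mulVec_le (sgnJ *ᵥ y) y
  rwa [norm_toLp_sgnJ_mulVec, mul_assoc, ← sq, sq_norm_toLp_fin_two] at h

lemma re_trace_mul_jNormSq_sub_le (ξ : Matrix (Fin 2) (Fin 2) ℂ) (y : Fin 2 → ℂ) :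
    ξ.trace.re * jNormSq y - 2 * ‖ξ‖ * (‖y 0‖ ^ 2 + ‖y 1‖ ^ 2) ≤
      2 * (star (sgnJ *ᵥ y) ⬝ᵥ ξ *ᵥ y).re := by
  set s := conj (ξ 0 1) - ξ 1 0
  have hid : 2 * (star (sgnJ *ᵥ y) ⬝ᵥ ξ *ᵥ y).re - ξ.trace.re * jNormSq y =
      (ξ 0 0 - ξ 1 1).re * (‖y 0‖ ^ 2 + ‖y 1‖ ^ 2) + 2 * (s * (y 0 * conj (y 1))).re := by
    simp [jNormSq, sgnJ, s, trace_fin_two, dotProduct, mulVec, Fin.sum_univ_two, Complex.sq_norm,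
      Complex.normSq_apply]
    ring
  have hcross : -(‖s‖ * (‖y 0‖ ^ 2 + ‖y 1‖ ^ 2)) ≤ 2 * (s * (y 0 * conj (y 1))).re := by
    have hre := neg_le_of_abs_le (Complex.abs_re_le_norm (s * (y 0 * conj (y 1))))
    rw [norm_mul, norm_mul, Complex.norm_conj] at hre
    nlinarith [sq_nonneg (‖y 0‖ - ‖y 1‖), norm_nonneg s]
  have hdiag := neg_abs_le (ξ 0 0 - ξ 1 1).re
  have hkey := abs_re_sub_add_norm_conj_sub_le ξ
  nlinarith [sq_nonneg ‖y 0‖, sq_nonneg ‖y 1‖]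

noncomputable def mobius (A : Matrix (Fin 2) (Fin 2) ℂ) (z : ℂ) : ℂ :=
  (A 0 0 * z + A 0 1) / (A 1 0 * z + A 1 1)

section Mobius

variable {A : Matrix (Fin 2) (Fin 2) ℂ} {z z' : ℂ}

lemma norm_numerator_lt_norm_denominator (hA : (sgnJ - Aᴴ * sgnJ * A).PosDef) (hz : ‖z‖ ≤ 1) :
    ‖A 0 0 * z + A 0 1‖ < ‖A 1 0 * z + A 1 1‖ := by
  have hpos := hA.dotProduct_mulVec_pos (x := ![z, 1]) (by simp [funext_iff, Fin.forall_fin_two])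
  rw [star_dotProduct_sgnJ_sub_mulVec, Complex.zero_lt_real, sub_pos] at hpos
  have hz' : jNormSq ![z, 1] ≤ 0 := by
    simp only [jNormSq, cons_val_zero, cons_val_one, norm_one]
    nlinarith [norm_nonneg z]
  have : jNormSq (A *ᵥ ![z, 1]) < 0 := by linarith
  simp only [jNormSq, mulVec, dotProduct, Fin.sum_univ_two, cons_val_zero, cons_val_one, mul_one,
    sub_neg] at this
  exact (pow_lt_pow_iff_left₀ (norm_nonneg _) (norm_nonneg _) two_ne_zero).mp this

lemma denominator_ne_zero (hA : (sgnJ - Aᴴ * sgnJ * A).PosDef) (hz : ‖z‖ ≤ 1) :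
    A 1 0 * z + A 1 1 ≠ 0 :=
  norm_pos_iff.mp ((norm_nonneg _).trans_lt (norm_numerator_lt_norm_denominator hA hz))

lemma norm_mobius_lt_one (hA : (sgnJ - Aᴴ * sgnJ * A).PosDef) (hz : ‖z‖ ≤ 1) :
    ‖mobius A z‖ < 1 := by
  rw [mobius, norm_div, div_lt_one (norm_pos_iff.mpr (denominator_ne_zero hA hz))]
  exact norm_numerator_lt_norm_denominator hA hz

lemma sq_norm_mul_sub_center (a b c d w : ℂ) :
    ‖((‖d‖ ^ 2 - ‖c‖ ^ 2 : ℝ) : ℂ) * w - (b * conj d - a * conj c)‖ ^ 2 =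
      (‖d‖ ^ 2 - ‖c‖ ^ 2) * (‖d * w - b‖ ^ 2 - ‖a - c * w‖ ^ 2) + ‖a * d - b * c‖ ^ 2 := by
  simp only [← Complex.normSq_eq_norm_sq, Complex.normSq_apply, Complex.sub_re, Complex.sub_im,
    Complex.mul_re, Complex.mul_im, Complex.conj_re, Complex.conj_im, Complex.ofReal_re,
    Complex.ofReal_im]
  ring

/-- The Möbius map of `A` sends the closed unit disk into the disk with radius `|det A| / Δ`
around `(A₀₁ Ā₁₁ - A₀₀ Ā₁₀) / Δ`, where `Δ = |A₁₁|² - |A₁₀|²`. -/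
lemma norm_mul_mobius_sub_center_le (hz : ‖z‖ ≤ 1) (hden : A 1 0 * z + A 1 1 ≠ 0)
    (hΔ : 0 ≤ ‖A 1 1‖ ^ 2 - ‖A 1 0‖ ^ 2) :
    ‖((‖A 1 1‖ ^ 2 - ‖A 1 0‖ ^ 2 : ℝ) : ℂ) * mobius A z -
        (A 0 1 * conj (A 1 1) - A 0 0 * conj (A 1 0))‖ ≤ ‖A.det‖ := by
  set ψ := mobius A z
  have hψ : ψ * (A 1 0 * z + A 1 1) = A 0 0 * z + A 0 1 := div_mul_cancel₀ _ hden
  have h₁ : (A 1 1 * ψ - A 0 1) * (A 1 0 * z + A 1 1) = z * A.det := by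
    rw [det_fin_two]; linear_combination A 1 1 * hψ
  have h₂ : (A 0 0 - A 1 0 * ψ) * (A 1 0 * z + A 1 1) = A.det := by
    rw [det_fin_two]; linear_combination -A 1 0 * hψ
  have hle : ‖A 1 1 * ψ - A 0 1‖ ≤ ‖A 0 0 - A 1 0 * ψ‖ := by
    rw [← mul_le_mul_iff_left₀ (norm_pos_iff.mpr hden), ← norm_mul, ← norm_mul, h₁, h₂, norm_mul]
    exact mul_le_of_le_one_left (norm_nonneg _) hz
  rw [← sq_le_sq₀ (norm_nonneg _) (norm_nonneg _), sq_norm_mul_sub_center, ← det_fin_two]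
  have : ‖A 1 1 * ψ - A 0 1‖ ^ 2 ≤ ‖A 0 0 - A 1 0 * ψ‖ ^ 2 := by gcongr
  nlinarith

lemma norm_mobius_sub_le (hz : ‖z‖ ≤ 1) (hz' : ‖z'‖ ≤ 1) (hden : A 1 0 * z + A 1 1 ≠ 0)
    (hden' : A 1 0 * z' + A 1 1 ≠ 0) (hΔ : 0 < ‖A 1 1‖ ^ 2 - ‖A 1 0‖ ^ 2) :
    ‖mobius A z - mobius A z'‖ ≤ 2 * ‖A.det‖ / (‖A 1 1‖ ^ 2 - ‖A 1 0‖ ^ 2) := by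
  set Δ := ‖A 1 1‖ ^ 2 - ‖A 1 0‖ ^ 2
  set w := A 0 1 * conj (A 1 1) - A 0 0 * conj (A 1 0)
  rw [le_div_iff₀ hΔ]
  calc ‖mobius A z - mobius A z'‖ * Δ = ‖(Δ * mobius A z - w) - (Δ * mobius A z' - w)‖ := by
        rw [sub_sub_sub_cancel_right, ← mul_sub, norm_mul, Complex.norm_real,
          Real.norm_of_nonneg hΔ.le, mul_comm]
    _ ≤ ‖A.det‖ + ‖A.det‖ := (norm_sub_le _ _).trans (add_le_add
        (norm_mul_mobius_sub_center_le hz hden hΔ.le)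
        (norm_mul_mobius_sub_center_le hz' hden' hΔ.le))
    _ = 2 * ‖A.det‖ := by ring

lemma sq_norm_sub_sq_norm_eq_jNormSq_inv (hA : A.det ≠ 0) :
    ‖A 1 1‖ ^ 2 - ‖A 1 0‖ ^ 2 = ‖A.det‖ ^ 2 * jNormSq (fun i => A⁻¹ i 0) := by
  have hinv : ∀ i, A⁻¹ i 0 = A.det⁻¹ * A.adjugate i 0 := fun i => by
    rw [Matrix.inv_def, Ring.inverse_eq_inv', Matrix.smul_apply, smul_eq_mul]
  simp only [jNormSq, hinv, adjugate_fin_two, of_apply, cons_val', cons_val_zero, cons_val_one,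
    cons_val_fin_one, norm_mul, norm_neg, norm_inv]
  field_simp

lemma norm_mobius_sub_le_of_inv (hA : A.det ≠ 0) (hφ : 0 < jNormSq (fun i => A⁻¹ i 0))
    (hz : ‖z‖ ≤ 1) (hz' : ‖z'‖ ≤ 1) (hden : A 1 0 * z + A 1 1 ≠ 0)
    (hden' : A 1 0 * z' + A 1 1 ≠ 0) :
    ‖mobius A z - mobius A z'‖ ≤ 2 * ‖A⁻¹.det‖ / jNormSq (fun i => A⁻¹ i 0) := by
  have hΔ := sq_norm_sub_sq_norm_eq_jNormSq_inv hA
  have hdet := norm_pos_iff.mpr hA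
  have h := norm_mobius_sub_le hz hz' hden hden' (by rw [hΔ]; positivity)
  rw [hΔ] at h
  rw [det_nonsing_inv, Ring.inverse_eq_inv', norm_inv]
  convert h using 1
  field_simp

end Mobius

lemma HasDerivWithinAt.matrix_mul_const {n : Type*} [Fintype n] [DecidableEq n]
    {Y : ℝ → Matrix n n ℂ} {Y' : Matrix n n ℂ} {s : Set ℝ} {x : ℝ}
    (h : HasDerivWithinAt Y Y' s x) (C : Matrix n n ℂ) :
    HasDerivWithinAt (fun t => Y t * C) (Y' * C) s x :=
  ((LinearMap.mulRight ℂ C).toContinuousLinearMap.restrictScalars ℝ).hasFDerivAt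
    |>.comp_hasDerivWithinAt x h

lemma HasDerivWithinAt.matrix_entry {m n : Type*} [Fintype m] [Fintype n] [DecidableEq m]
    [DecidableEq n] {Y : ℝ → Matrix m n ℂ} {Y' : Matrix m n ℂ} {s : Set ℝ} {x : ℝ}
    (h : HasDerivWithinAt Y Y' s x) (i : m) (j : n) :
    HasDerivWithinAt (fun t => Y t i j) (Y' i j) s x :=
  ((entryLinearMap ℂ ℂ i j).toContinuousLinearMap.restrictScalars ℝ).hasFDerivAt
    |>.comp_hasDerivWithinAt x h

lemma HasDerivWithinAt.matrix_col {m n : Type*} [Fintype m] [Fintype n] [DecidableEq m]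
    [DecidableEq n] {Y : ℝ → Matrix m n ℂ} {Y' : Matrix m n ℂ} {s : Set ℝ} {x : ℝ}
    (h : HasDerivWithinAt Y Y' s x) (j : n) :
    HasDerivWithinAt (fun t i => Y t i j) (fun i => Y' i j) s x :=
  hasDerivWithinAt_pi.2 fun i => h.matrix_entry i j

lemma hasDerivWithinAt_det_fin_two {Y : ℝ → Matrix (Fin 2) (Fin 2) ℂ}
    {M : Matrix (Fin 2) (Fin 2) ℂ} {s : Set ℝ} {x : ℝ} (h : HasDerivWithinAt Y (M * Y x) s x) :
    HasDerivWithinAt (fun t => (Y t).det) (M.trace * (Y x).det) s x := by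
  rw [show (fun t => (Y t).det) = fun t => Y t 0 0 * Y t 1 1 - Y t 0 1 * Y t 1 0 from
    funext fun t => Matrix.det_fin_two _]
  refine (((h.matrix_entry 0 0).mul (h.matrix_entry 1 1)).sub
    ((h.matrix_entry 0 1).mul (h.matrix_entry 1 0))).congr_deriv ?_
  simp [mul_apply, Fin.sum_univ_two, trace_fin_two, Matrix.det_fin_two]
  ring

lemma hasDerivWithinAt_jNormSq {y : ℝ → Fin 2 → ℂ} {y' : Fin 2 → ℂ} {s : Set ℝ} {x : ℝ}
    (h : HasDerivWithinAt y y' s x) :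
    HasDerivWithinAt (fun t => jNormSq (y t)) (2 * (star (sgnJ *ᵥ y x) ⬝ᵥ y').re) s x := by
  have hcomp := fun i => (hasDerivWithinAt_pi.1 h i).norm_sq
  refine ((hcomp 0).sub (hcomp 1)).congr_deriv ?_
  simp [sgnJ, Complex.inner, dotProduct, Fin.sum_univ_two, mul_comm]
  ring

lemma div_le_div_of_hasDerivWithinAt {u v u' v' : ℝ → ℝ} {a b : ℝ} (hab : a ≤ b)
    (hu : ∀ x ∈ Icc a b, HasDerivWithinAt u (u' x) (Icc a b) x)
    (hv : ∀ x ∈ Icc a b, HasDerivWithinAt v (v' x) (Icc a b) x)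
    (hv0 : ∀ x ∈ Icc a b, 0 < v x) (h : ∀ x ∈ Icc a b, u' x * v x ≤ u x * v' x) :
    u b / v b ≤ u a / v a := by
  have hq : ∀ x ∈ Icc a b, HasDerivWithinAt (fun t => u t / v t)
      ((u' x * v x - u x * v' x) / v x ^ 2) (Icc a b) x :=
    fun x hx => (hu x hx).div (hv x hx) (hv0 x hx).ne'
  refine antitoneOn_of_hasDerivWithinAt_nonpos (convex_Icc a b)
    (fun x hx => (hq x hx).continuousWithinAt)
    (fun x hx => (hq x (interior_subset hx)).mono interior_subset)
    (fun x hx => ?_) ⟨le_rfl, hab⟩ ⟨hab, le_rfl⟩ hab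
  exact div_nonpos_of_nonpos_of_nonneg (sub_nonpos.2 (h x (interior_subset hx))) (sq_nonneg _)

lemma re_star_sgnJ_mulVec_dotProduct_canonical (μ : ℂ) (ξ : Matrix (Fin 2) (Fin 2) ℂ)
    (y : Fin 2 → ℂ) :
    (star (sgnJ *ᵥ y) ⬝ᵥ ((I * μ) • sgnJ + ξ) *ᵥ y).re =
      -μ.im * (‖y 0‖ ^ 2 + ‖y 1‖ ^ 2) + (star (sgnJ *ᵥ y) ⬝ᵥ ξ *ᵥ y).re := by
  rw [add_mulVec, dotProduct_add, Complex.add_re, smul_mulVec, dotProduct_smul]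
  congr 1
  simp [sgnJ, dotProduct, mulVec, Fin.sum_univ_two, Complex.conj_mul', ← Complex.ofReal_pow]

section CanonicalSystem

variable {μ : ℂ} {c : ℝ}

lemma sq_norm_mul_le_re_canonical {ξ : Matrix (Fin 2) (Fin 2) ℂ} (hξ : ‖ξ‖ ≤ c)
    (y : Fin 2 → ℂ) :
    2 * (-μ.im - c) * (‖y 0‖ ^ 2 + ‖y 1‖ ^ 2) ≤
      2 * (star (sgnJ *ᵥ y) ⬝ᵥ ((I * μ) • sgnJ + ξ) *ᵥ y).re := by
  rw [re_star_sgnJ_mulVec_dotProduct_canonical]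
  have := neg_le_of_abs_le
    ((Complex.abs_re_le_norm _).trans (norm_star_sgnJ_mulVec_dotProduct_le ξ y))
  have : ‖ξ‖ * (‖y 0‖ ^ 2 + ‖y 1‖ ^ 2) ≤ c * (‖y 0‖ ^ 2 + ‖y 1‖ ^ 2) := by gcongr
  linarith

lemma re_trace_sub_mul_jNormSq_le_re_canonical {ξ : Matrix (Fin 2) (Fin 2) ℂ} (hξ : ‖ξ‖ ≤ c)
    (hμc : c ≤ -μ.im) (y : Fin 2 → ℂ) :
    (ξ.trace.re - 2 * (μ.im + c)) * jNormSq y ≤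
      2 * (star (sgnJ *ᵥ y) ⬝ᵥ ((I * μ) • sgnJ + ξ) *ᵥ y).re := by
  rw [re_star_sgnJ_mulVec_dotProduct_canonical]
  have := re_trace_mul_jNormSq_sub_le ξ y
  have : ‖ξ‖ * (‖y 0‖ ^ 2 + ‖y 1‖ ^ 2) ≤ c * (‖y 0‖ ^ 2 + ‖y 1‖ ^ 2) := by gcongr
  have : (-μ.im - c) * jNormSq y ≤ (-μ.im - c) * (‖y 0‖ ^ 2 + ‖y 1‖ ^ 2) :=
    mul_le_mul_of_nonneg_left (by simp only [jNormSq]; linarith [sq_nonneg ‖y 1‖]) (by linarith)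
  linarith

variable {ξ : ℝ → Matrix (Fin 2) (Fin 2) ℂ} {l : ℝ} {y : ℝ → Fin 2 → ℂ}

theorem one_le_jNormSq_of_hasDerivWithinAt (hμc : c ≤ -μ.im)
    (hξ : ∀ x ∈ Icc 0 l, ‖ξ x‖ ≤ c)
    (hy : ∀ x ∈ Icc 0 l, HasDerivWithinAt y (((I * μ) • sgnJ + ξ x) *ᵥ y x) (Icc 0 l) x)
    (hy0 : jNormSq (y 0) = 1) {x : ℝ} (hx : x ∈ Icc 0 l) : 1 ≤ jNormSq (y x) := by
  have hφ := fun x hx => hasDerivWithinAt_jNormSq (hy x hx)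
  have hmono : MonotoneOn (fun t => jNormSq (y t)) (Icc 0 l) :=
    monotoneOn_of_hasDerivWithinAt_nonneg (convex_Icc 0 l)
      (fun x hx => (hφ x hx).continuousWithinAt)
      (fun x hx => (hφ x (interior_subset hx)).mono interior_subset)
      (fun x hx => (mul_nonneg (mul_nonneg two_pos.le (by linarith)) (by positivity)).trans
        (sq_norm_mul_le_re_canonical (hξ x (interior_subset hx)) (y x)))
  exact hy0 ▸ hmono ⟨le_rfl, hx.1.trans hx.2⟩ hx hx.1

theorem norm_le_jNormSq_mul_exp (hl : 0 ≤ l) (hμc : c ≤ -μ.im)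
    (hξ : ∀ x ∈ Icc 0 l, ‖ξ x‖ ≤ c)
    (hy : ∀ x ∈ Icc 0 l, HasDerivWithinAt y (((I * μ) • sgnJ + ξ x) *ᵥ y x) (Icc 0 l) x)
    (hy0 : jNormSq (y 0) = 1) {D : ℝ → ℂ}
    (hD : ∀ x ∈ Icc 0 l, HasDerivWithinAt D ((ξ x).trace * D x) (Icc 0 l) x) (hD0 : ‖D 0‖ = 1) :
    ‖D l‖ ≤ jNormSq (y l) * Real.exp (2 * (μ.im + c) * l) := by
  set φ := fun t => jNormSq (y t)
  set φ' := fun t => 2 * (star (sgnJ *ᵥ y t) ⬝ᵥ ((I * μ) • sgnJ + ξ t) *ᵥ y t).re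
  set κ := 4 * (μ.im + c)
  have hφ : ∀ x ∈ Icc 0 l, 1 ≤ φ x := fun x hx =>
    one_le_jNormSq_of_hasDerivWithinAt hμc hξ hy hy0 hx
  have hu : ∀ x ∈ Icc 0 l, HasDerivWithinAt (fun t => ‖D t‖ ^ 2)
      (2 * (ξ x).trace.re * ‖D x‖ ^ 2) (Icc 0 l) x := by
    intro x hx
    refine (hD x hx).norm_sq.congr_deriv ?_
    rw [Complex.inner, mul_assoc, Complex.mul_conj', ← Complex.ofReal_pow, Complex.re_mul_ofReal]
    ring
  have hv : ∀ x ∈ Icc 0 l, HasDerivWithinAt (fun t => φ t ^ 2 * Real.exp (κ * t))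
      ((2 * φ x * φ' x + κ * φ x ^ 2) * Real.exp (κ * x)) (Icc 0 l) x := by
    intro x hx
    have hexp := ((hasDerivAt_id x).const_mul κ).exp.hasDerivWithinAt (s := Icc 0 l)
    refine (((hasDerivWithinAt_jNormSq (hy x hx)).pow 2).mul hexp).congr_deriv ?_
    simp only [φ, φ', Pi.pow_apply, id]
    ring
  have hratio := div_le_div_of_hasDerivWithinAt hl hu hv
    (fun x hx => by have := hφ x hx; positivity) fun x hx => by
      have hφx := hφ x hx
      have hlow := re_trace_sub_mul_jNormSq_le_re_canonical (hξ x hx) hμc (y x)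
      have : 2 * (ξ x).trace.re * φ x ^ 2 ≤ 2 * φ x * φ' x + κ * φ x ^ 2 := by
        simp only [κ]; nlinarith
      calc 2 * (ξ x).trace.re * ‖D x‖ ^ 2 * (φ x ^ 2 * Real.exp (κ * x))
          = ‖D x‖ ^ 2 * (2 * (ξ x).trace.re * φ x ^ 2) * Real.exp (κ * x) := by ring
        _ ≤ ‖D x‖ ^ 2 * (2 * φ x * φ' x + κ * φ x ^ 2) * Real.exp (κ * x) := by gcongr
        _ = _ := by ring
  have hφl := hφ l ⟨hl, le_rfl⟩
  have hφ0 : φ 0 = 1 := hy0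
  rw [hφ0, hD0, mul_zero, Real.exp_zero, one_pow, mul_one, div_one,
    div_le_one (by positivity)] at hratio
  rw [← sq_le_sq₀ (norm_nonneg _) (by positivity), mul_pow, ← Real.exp_nat_mul]
  convert hratio using 3
  push_cast; ring

theorem one_le_jNormSq_and_norm_det_le_of_fundamental {Y : ℝ → Matrix (Fin 2) (Fin 2) ℂ}
    (hl : 0 ≤ l) (hμc : c ≤ -μ.im) (hξ : ∀ x ∈ Icc 0 l, ‖ξ x‖ ≤ c)
    (hY : ∀ x ∈ Icc 0 l, HasDerivWithinAt Y (((I * μ) • sgnJ + ξ x) * Y x) (Icc 0 l) x)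
    (hY0 : Y 0 = 1) :
    1 ≤ jNormSq (fun i => Y l i 0) ∧
      ‖(Y l).det‖ ≤ jNormSq (fun i => Y l i 0) * Real.exp (2 * (μ.im + c) * l) := by
  have hcol : ∀ x ∈ Icc 0 l, HasDerivWithinAt (fun t i => Y t i 0)
      (((I * μ) • sgnJ + ξ x) *ᵥ fun i => Y x i 0) (Icc 0 l) x := fun x hx =>
    ((hY x hx).matrix_col 0).congr_deriv (by ext i; simp [mul_apply, mulVec, dotProduct])
  have hcol0 : jNormSq (fun i => Y 0 i 0) = 1 := by simp [hY0, jNormSq]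
  have hdet : ∀ x ∈ Icc 0 l, HasDerivWithinAt (fun t => (Y t).det)
      ((ξ x).trace * (Y x).det) (Icc 0 l) x := fun x hx => by
    simpa [trace_add, sgnJ, trace_fin_two] using hasDerivWithinAt_det_fin_two (hY x hx)
  exact ⟨one_le_jNormSq_of_hasDerivWithinAt hμc hξ hcol hcol0 ⟨hl, le_rfl⟩,
    norm_le_jNormSq_mul_exp hl hμc hξ hcol hcol0 hdet (by simp [hY0])⟩

end CanonicalSystem

theorem weyl_disk_estimate_general
    (l M : ℝ) (hl : 0 < l) (μ : ℂ) (hμ : μ.im < -(M / 4))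
    (W ξ : ℝ → Matrix (Fin 2) (Fin 2) ℂ)
    (hW : ∀ x ∈ Icc (0 : ℝ) l,
      HasDerivWithinAt W ((Complex.I * μ) • sgnJ * W x + ξ x * W x) (Icc 0 l) x)
    (hQ0 : (W 0)ᴴ * W 0 = 1)
    (hξ : ∃ c : ℝ, c < M / 4 ∧ ∀ x ∈ Icc (0 : ℝ) l, ‖ξ x‖ ≤ c)
    (hWl : IsUnit (W l))
    (𝔄 : Matrix (Fin 2) (Fin 2) ℂ) (h𝔄 : 𝔄 = W 0 * (W l)⁻¹)
    (hineq : (sgnJ - 𝔄ᴴ * sgnJ * 𝔄).PosDef)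
    (θ θ' : ℂ) (hθ : ‖θ‖ ≤ 1) (hθ' : ‖θ'‖ ≤ 1) :
    𝔄 1 0 * θ + 𝔄 1 1 ≠ 0 ∧ 𝔄 1 0 * θ' + 𝔄 1 1 ≠ 0 ∧
    ‖(𝔄 0 0 * θ + 𝔄 0 1) / (𝔄 1 0 * θ + 𝔄 1 1)‖ < 1 ∧
    ‖(𝔄 0 0 * θ' + 𝔄 0 1) / (𝔄 1 0 * θ' + 𝔄 1 1)‖ < 1 ∧
    ‖(𝔄 0 0 * θ + 𝔄 0 1) / (𝔄 1 0 * θ + 𝔄 1 1) -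
        (𝔄 0 0 * θ' + 𝔄 0 1) / (𝔄 1 0 * θ' + 𝔄 1 1)‖ ≤
      2 * Real.exp ((2 * μ.im + M / 2) * l) := by
  obtain ⟨c, hcM, hξc⟩ := hξ
  have hμc : c ≤ -μ.im := by linarith
  set Y := fun x => W x * (W 0)ᴴ
  have hY : ∀ x ∈ Icc 0 l, HasDerivWithinAt Y (((I * μ) • sgnJ + ξ x) * Y x) (Icc 0 l) x :=
    fun x hx => by simpa only [Y, add_mul, Matrix.mul_assoc] using (hW x hx).matrix_mul_const _
  have hY0 : Y 0 = 1 := mul_eq_one_comm.mp hQ0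
  have hright : 𝔄 * Y l = 1 := by
    rw [h𝔄, Matrix.mul_assoc, ← Matrix.mul_assoc _ (W l),
      Matrix.nonsing_inv_mul _ ((isUnit_iff_isUnit_det _).mp hWl), Matrix.one_mul, ← hY0]
  have hdet : 𝔄.det ≠ 0 := (isUnit_det_of_right_inverse hright).ne_zero
  obtain ⟨hφ, hdecay⟩ := one_le_jNormSq_and_norm_det_le_of_fundamental hl.le hμc hξc hY hY0
  rw [← inv_eq_right_inv hright] at hφ hdecay
  refine ⟨denominator_ne_zero hineq hθ, denominator_ne_zero hineq hθ', norm_mobius_lt_one hineq hθ,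
    norm_mobius_lt_one hineq hθ', ?_⟩
  calc ‖mobius 𝔄 θ - mobius 𝔄 θ'‖
      ≤ 2 * ‖𝔄⁻¹.det‖ / jNormSq (fun i => 𝔄⁻¹ i 0) :=
        norm_mobius_sub_le_of_inv hdet (by linarith) hθ hθ' (denominator_ne_zero hineq hθ)
          (denominator_ne_zero hineq hθ')
    _ ≤ 2 * Real.exp (2 * (μ.im + c) * l) := by
        rw [div_le_iff₀ (by linarith)]; linarith
    _ ≤ 2 * Real.exp ((2 * μ.im + M / 2) * l) := by
        gcongr; nlinarith

/-- Lemma 2.3 of [MST] (estimate (1.d11)): for `𝔄 = Q(0) W(l,μ)⁻¹` coming from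
`W′ = (iμj + ξ)W`, `W(0,μ) = Q(0)` unitary, `sup_{x∈[0,l]} ‖ξ‖ < M/4`,
`Im μ < −M/4`, and satisfying `𝔄* j 𝔄 < j`, the linear fractional transforms
`ψ = (𝔄₁₁θ + 𝔄₁₂)/(𝔄₂₁θ + 𝔄₂₂)` (|θ| ≤ 1) are well defined, take values in the
open unit disk, and any two of them satisfy
`|ψ − ψ̆| ≤ 2 exp((i(μ̄ − μ) + M/2) l) = 2 exp((2 Im μ + M/2) l)`. -/
theorem weyl_disk_estimate
    (l M : ℝ) (hl : 0 < l) (hM : 0 < M) (μ : ℂ) (hμ : μ.im < -(M / 4))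
    (W ξ : ℝ → Matrix (Fin 2) (Fin 2) ℂ)
    (hW : ∀ x ∈ Icc (0 : ℝ) l,
      HasDerivWithinAt W ((Complex.I * μ) • sgnJ * W x + ξ x * W x) (Icc 0 l) x)
    (hQ0 : (W 0)ᴴ * W 0 = 1)
    (hξ : ∃ c : ℝ, c < M / 4 ∧ ∀ x ∈ Icc (0 : ℝ) l, ‖ξ x‖ ≤ c)
    (hWl : IsUnit (W l))
    (𝔄 : Matrix (Fin 2) (Fin 2) ℂ) (h𝔄 : 𝔄 = W 0 * (W l)⁻¹)
    (hineq : (sgnJ - 𝔄ᴴ * sgnJ * 𝔄).PosDef)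
    (θ θ' : ℂ) (hθ : ‖θ‖ ≤ 1) (hθ' : ‖θ'‖ ≤ 1) :
    𝔄 1 0 * θ + 𝔄 1 1 ≠ 0 ∧ 𝔄 1 0 * θ' + 𝔄 1 1 ≠ 0 ∧
    ‖(𝔄 0 0 * θ + 𝔄 0 1) / (𝔄 1 0 * θ + 𝔄 1 1)‖ < 1 ∧
    ‖(𝔄 0 0 * θ' + 𝔄 0 1) / (𝔄 1 0 * θ' + 𝔄 1 1)‖ < 1 ∧
    ‖(𝔄 0 0 * θ + 𝔄 0 1) / (𝔄 1 0 * θ + 𝔄 1 1) -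
        (𝔄 0 0 * θ' + 𝔄 0 1) / (𝔄 1 0 * θ' + 𝔄 1 1)‖ ≤
      2 * Real.exp ((2 * μ.im + M / 2) * l) :=
  weyl_disk_estimate_general l M hl μ hμ W ξ hW hQ0 hξ hWl 𝔄 h𝔄 hineq θ θ' hθ hθ'
end
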